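/- Weak disjunction property for IEL⁻: for all formulas A and B, if ⊢ □(A ∨ B) in 𝕀EL⁻, then ⊢ □A or ⊢ □B. -/
import Mathlib


namespace IEL

/-- Formulas of intuitionistic epistemic logic: atoms, `⊥`, `⊤`, `∧`, `∨`, `→`, `□`. -/
inductive Formula : Type where
  | atom : ℕ → Formula
  | bot : Formula
  | top : Formula
  | and : Formula → Formula → Formula
  | or : Formula → Formula → Formula
  | imp : Formula → Formula → Formula
  | box : Formula → Formula

/-- The Hilbert system `𝕀EL⁻`: axiom schemes of intuitionistic propositional logic,
the scheme `K`, co-reflection `A → □A`, and modus ponens as the only inference rule. -/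
inductive Hilbert : Set Formula → Formula → Prop where
  | hyp {Γ A} : A ∈ Γ → Hilbert Γ A
  | imp1 {Γ A B} : Hilbert Γ (.imp A (.imp B A))
  | imp2 {Γ A B C} :
      Hilbert Γ (.imp (.imp A (.imp B C)) (.imp (.imp A B) (.imp A C)))
  | andI {Γ A B} : Hilbert Γ (.imp A (.imp B (.and A B)))
  | andE1 {Γ A B} : Hilbert Γ (.imp (.and A B) A)
  | andE2 {Γ A B} : Hilbert Γ (.imp (.and A B) B)
  | orI1 {Γ A B} : Hilbert Γ (.imp A (.or A B))
  | orI2 {Γ A B} : Hilbert Γ (.imp B (.or A B))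
  | orE {Γ A B C} :
      Hilbert Γ (.imp (.imp A C) (.imp (.imp B C) (.imp (.or A B) C)))
  | exfalso {Γ A} : Hilbert Γ (.imp .bot A)
  | top {Γ} : Hilbert Γ .top
  | k {Γ A B} : Hilbert Γ (.imp (.box (.imp A B)) (.imp (.box A) (.box B)))
  | coreflection {Γ A} : Hilbert Γ (.imp A (.box A))
  | mp {Γ A B} : Hilbert Γ (.imp A B) → Hilbert Γ A → Hilbert Γ B

/-- `⊢ A` : derivability in `𝕀EL⁻` from the empty set of hypotheses. -/
def Prov (A : Formula) : Prop := Hilbert ∅ A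

/-- The Kleene/Aczel slash predicate for `IEL⁻`. -/
def Slash : Formula → Prop
  | .atom n => Prov (.atom n)
  | .bot => False
  | .top => True
  | .and A B => Slash A ∧ Slash B
  | .or A B => Slash A ∨ Slash B
  | .imp A B => Prov (.imp A B) ∧ (Slash A → Slash B)
  | .box A => Prov (.box A) ∧ Slash A

/-- The slash implies provability. -/
theorem slash_prov : ∀ A : Formula, Slash A → Prov A := by
  intro A
  induction A with
  | atom n => exact fun h => h
  | bot => exact fun h => h.elim
  | top => exact fun _ => Hilbert.top
  | and A B ihA ihB =>
      rintro ⟨hA, hB⟩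
      exact Hilbert.mp (Hilbert.mp Hilbert.andI (ihA hA)) (ihB hB)
  | or A B ihA ihB =>
      rintro (hA | hB)
      · exact Hilbert.mp Hilbert.orI1 (ihA hA)
      · exact Hilbert.mp Hilbert.orI2 (ihB hB)
  | imp A B ihA ihB => exact fun h => h.1
  | box A ih => exact fun h => h.1

/-- Soundness of the slash: every theorem of `IEL⁻` is slashed. -/
theorem prov_slash {A : Formula} (h : Prov A) : Slash A := by
  induction h with
  | hyp hmem => exact absurd hmem (Set.notMem_empty _)
  | imp1 =>
      refine ⟨Hilbert.imp1, fun hA => ⟨?_, fun _ => hA⟩⟩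
      exact Hilbert.mp Hilbert.imp1 (slash_prov _ hA)
  | imp2 =>
      refine ⟨Hilbert.imp2, fun h1 => ⟨?_, fun h2 => ⟨?_, fun hA => (h1.2 hA).2 (h2.2 hA)⟩⟩⟩
      · exact Hilbert.mp Hilbert.imp2 h1.1
      · exact Hilbert.mp (Hilbert.mp Hilbert.imp2 h1.1) h2.1
  | andI =>
      refine ⟨Hilbert.andI, fun hA => ⟨?_, fun hB => ⟨hA, hB⟩⟩⟩
      exact Hilbert.mp Hilbert.andI (slash_prov _ hA)
  | andE1 => exact ⟨Hilbert.andE1, fun h => h.1⟩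
  | andE2 => exact ⟨Hilbert.andE2, fun h => h.2⟩
  | orI1 => exact ⟨Hilbert.orI1, fun hA => Or.inl hA⟩
  | orI2 => exact ⟨Hilbert.orI2, fun hB => Or.inr hB⟩
  | orE =>
      refine ⟨Hilbert.orE, fun h1 => ⟨?_, fun h2 => ⟨?_, fun hAB => ?_⟩⟩⟩
      · exact Hilbert.mp Hilbert.orE h1.1
      · exact Hilbert.mp (Hilbert.mp Hilbert.orE h1.1) h2.1
      · rcases hAB with hA | hB
        · exact h1.2 hA
        · exact h2.2 hB
  | exfalso => exact ⟨Hilbert.exfalso, fun h => h.elim⟩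
  | top => exact trivial
  | k =>
      refine ⟨Hilbert.k, fun h1 => ⟨Hilbert.mp Hilbert.k h1.1, fun h2 =>
        ⟨Hilbert.mp (Hilbert.mp Hilbert.k h1.1) h2.1, h1.2.2 h2.2⟩⟩⟩
  | coreflection =>
      refine ⟨Hilbert.coreflection, fun hA =>
        ⟨Hilbert.mp Hilbert.coreflection (slash_prov _ hA), hA⟩⟩
  | mp h1 h2 ih1 ih2 => exact ih1.2 ih2

/-- **Weak disjunction property for `IEL⁻`**: if `⊢ □(A ∨ B)` then `⊢ □A` or `⊢ □B`. -/
theorem weak_disjunction_property :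
    ∀ A B : Formula, Prov (.box (.or A B)) → Prov (.box A) ∨ Prov (.box B) := by
  intro A B h
  rcases (prov_slash h).2 with hA | hB
  · exact Or.inl (Hilbert.mp Hilbert.coreflection (slash_prov _ hA))
  · exact Or.inr (Hilbert.mp Hilbert.coreflection (slash_prov _ hB))

end IEL
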